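/- arXiv:0904.4230 — 2 statements merged into one kernel-verified Lean document; each statement's English description precedes it below -/
import Mathlib

section
/- Let G be a group satisfying max-n (every increasing chain of normal subgroups stabilizes) such that every quotient group of G is residually finite. Then cb(G) = sup{cb(G/N) + 1 : N an infinite normal subgroup of G}. -/
noncomputable section

/-- Chabauty topology on the set of subgroups of `G`: the topology induced from the
product topology on `{0,1}^G` via indicator functions. -/
noncomputable instance chabautyTopology {G : Type*} [Group G] : TopologicalSpace (Subgroup G) :=
  TopologicalSpace.induced (fun N g => @decide (g ∈ N) (Classical.propDecidable _))
    (inferInstance : TopologicalSpace (G → Bool))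

/-- Iterated Cantor–Bendixson derivatives of the space `X`:
`X^(0) = X`, `X^(α+1)` is the set of accumulation points of `X^(α)`, and
`X^(λ) = ⋂_{β<λ} X^(β)` for limit `λ`. -/
noncomputable def cbD (X : Type*) [TopologicalSpace X] (o : Ordinal) : Set X :=
  Ordinal.limitRecOn o Set.univ (fun _ ih => {x | AccPt x (Filter.principal ih)})
    (fun o _ ih => ⋂ β : Set.Iio o, ih β.1 β.2)

/-- The point `x` has Cantor–Bendixson rank exactly `α` in `X`: it belongs to the `α`-th
derivative but not to the `(α+1)`-st (so `α` is the largest ordinal with `x ∈ X^(α)`). -/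
def CBRankEq {X : Type*} [TopologicalSpace X] (x : X) (α : Ordinal) : Prop :=
  x ∈ cbD X α ∧ x ∉ cbD X (α + 1)

/-- The Cantor–Bendixson rank of a point: the largest `α` with `x ∈ X^(α)`
(the set of such `α` is an initial segment of the ordinals, closed under limits). -/
noncomputable def cbRank {X : Type*} [TopologicalSpace X] (x : X) : Ordinal :=
  sSup {α | x ∈ cbD X α}

/-- The trivial subgroup, as a point of the space `𝒩(G)` of normal subgroups of `G`
(with its Chabauty topology); `cb(G)` is the Cantor–Bendixson rank of this point. -/
def nsBot (G : Type*) [Group G] : {N : Subgroup G // N.Normal} := ⟨⊥, inferInstance⟩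

universe u

/-!
Under max-n every normal subgroup is the normal closure of a finite set, so in `𝒩(G)` a
neighbourhood of `N` can demand `N ≤ K`: accumulation points of a set `S` are approached by
members of `S` lying strictly above, and avoiding any prescribed finite set outside `N`.
This has three consequences.

* Ranks are bounded, by well-founded induction along `>`.
* The normal subgroups containing `N` form an open subset of `𝒩(G)`, so `cb(G/N)` is the rank of
  `N` in `𝒩(G)`.
* `{1}` lies in the `(α+1)`-st derivative iff some infinite normal subgroup lies in the `α`-th.
  If `N` is infinite, residual finiteness gives finite-index normal `L` avoiding any finite set
  of nontrivial elements, and `N ⊓ L ≠ 1` stays in the `α`-th derivative: intersecting with `L`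
  preserves accumulation, because a `K > N` with `K ⊓ L = N ⊓ L` would make `K/N` a nontrivial
  finite normal subgroup of `G/N`, and all of these meet the finite set of nontrivial elements
  of the largest one. Conversely, subgroups approaching `{1}` while avoiding the nontrivial
  elements of the largest finite normal subgroup of `G` are infinite.
-/

open Filter Topology Set

local notation "𝒩(" G ")" => Subtype (@Subgroup.Normal G _)

section CantorBendixson

universe v

variable {X : Type*} [TopologicalSpace X]

theorem cbD_zero : cbD X 0 = univ := Ordinal.limitRecOn_zero _ _ _

theorem cbD_succ (o : Ordinal) : cbD X (o + 1) = derivedSet (cbD X o) := by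
  rw [cbD, Ordinal.limitRecOn_add_one]
  rfl

theorem cbD_limit {o : Ordinal} (ho : Order.IsSuccLimit o) : cbD X o = ⋂ β : Iio o, cbD X β :=
  Ordinal.limitRecOn_limit _ _ _ _ ho

theorem mem_cbD_limit_iff {o : Ordinal} (ho : Order.IsSuccLimit o) {x : X} :
    x ∈ cbD X o ↔ ∀ β < o, x ∈ cbD X β := by
  simp [cbD_limit ho]

theorem cbD_succ_subset (o : Ordinal) : cbD X (o + 1) ⊆ cbD X o := by
  induction o using Ordinal.limitRecOn with
  | zero => simp [cbD_zero]
  | add_one o ih =>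
    exact (cbD_succ (o + 1)).subset.trans ((derivedSet_mono _ _ ih).trans (cbD_succ o).superset)
  | limit o ho ih =>
    intro x hx
    rw [cbD_succ] at hx
    refine (mem_cbD_limit_iff ho).2 fun β hβ => ih β hβ ?_
    rw [cbD_succ]
    exact derivedSet_mono _ _ (fun y hy => (mem_cbD_limit_iff ho).1 hy β hβ) hx

theorem cbD_antitone : Antitone (cbD X : Ordinal.{v} → Set X) := by
  intro a b hab
  induction b using Ordinal.limitRecOn with
  | zero => rw [nonpos_iff_eq_zero.1 hab]
  | add_one o ih =>
    rcases hab.lt_or_eq with h | rfl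
    · exact (cbD_succ_subset o).trans (ih (Order.lt_add_one_iff.1 h))
    · rfl
  | limit o ho ih =>
    rcases hab.lt_or_eq with h | rfl
    · exact fun x hx => (mem_cbD_limit_iff ho).1 hx a h
    · rfl

theorem cbD_csSup {S : Set Ordinal.{v}} (hS : BddAbove S) :
    cbD X (sSup S) = ⋂ α ∈ S, cbD X α := by
  refine subset_antisymm (subset_iInter₂ fun α hα => cbD_antitone (le_csSup hS hα)) fun x hx => ?_
  rw [mem_iInter₂] at hx
  by_cases hlim : Order.IsSuccPrelimit (sSup S)
  · obtain h0 | h0 := eq_or_ne (sSup S) 0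
    · simp [h0, cbD_zero]
    refine (mem_cbD_limit_iff ⟨by simpa using h0, hlim⟩).2 fun β hβ => ?_
    obtain ⟨α, hα, hβα⟩ := exists_lt_of_lt_csSup' hβ
    exact cbD_antitone hβα.le (hx α hα)
  · exact hx _ (csSup_mem_of_not_isSuccPrelimit hlim)

theorem mem_cbD_iff_le_cbRank {x : X} (hx : ∃ β : Ordinal.{v}, x ∉ cbD X β) {α : Ordinal.{v}} :
    x ∈ cbD X α ↔ α ≤ cbRank x := by
  obtain ⟨β, hβ⟩ := hx
  have hbdd : BddAbove {α : Ordinal.{v} | x ∈ cbD X α} :=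
    ⟨β, fun γ hγ => not_lt.1 fun h => hβ (cbD_antitone h.le hγ)⟩
  refine ⟨fun h => le_csSup hbdd h, fun h => cbD_antitone h ?_⟩
  rw [cbRank, cbD_csSup hbdd]
  exact mem_iInter₂.2 fun _ hα => hα

theorem mapsTo_cbD {Y : Type*} [TopologicalSpace Y] {f : X → Y}
    (hf : ∀ (x : X) (S : Set X), AccPt x (𝓟 S) → AccPt (f x) (𝓟 (f '' S))) (α : Ordinal) :
    MapsTo f (cbD X α) (cbD Y α) := by
  induction α using Ordinal.limitRecOn with
  | zero => simp [cbD_zero]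
  | add_one o ih =>
    rw [cbD_succ, cbD_succ]
    exact fun x hx => (hf x _ hx).mono (principal_mono.2 ih.image_subset)
  | limit o ho ih =>
    intro x hx
    rw [mem_cbD_limit_iff ho] at hx ⊢
    exact fun β hβ => ih β hβ (hx β hβ)

theorem cbD_eq_preimage_of_isOpenEmbedding {Y : Type*} [TopologicalSpace Y] {f : Y → X}
    (hf : IsOpenEmbedding f) (α : Ordinal) : cbD Y α = f ⁻¹' cbD X α := by
  induction α using Ordinal.limitRecOn with
  | zero => simp [cbD_zero]
  | add_one o ih =>
    ext y
    rw [cbD_succ, cbD_succ, ih, mem_preimage, mem_derivedSet, mem_derivedSet, ← comap_principal,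
      hf.accPt_comap_iff]
  | limit o ho ih =>
    rw [cbD_limit ho, cbD_limit ho, preimage_iInter]
    exact iInter_congr fun β => ih β.1 β.2

theorem cbRank_of_isOpenEmbedding {Y : Type*} [TopologicalSpace Y] {f : Y → X}
    (hf : IsOpenEmbedding f) (y : Y) : (cbRank (f y) : Ordinal.{v}) = cbRank y := by
  simp only [cbRank, cbD_eq_preimage_of_isOpenEmbedding hf, mem_preimage]

end CantorBendixson

section GroupTheory

variable {G : Type*} [Group G]

instance : SemilatticeInf 𝒩(G) :=
  Subtype.semilatticeInf fun _ _ hN hK => @Subgroup.normal_inf_normal _ _ _ _ hN hK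

instance [WellFoundedGT 𝒩(G)] (N : Subgroup G) [N.Normal] : WellFoundedGT 𝒩(G ⧸ N) :=
  StrictMono.wellFoundedGT (f := fun K : 𝒩(G ⧸ N) =>
      (⟨K.1.comap (QuotientGroup.mk' N), K.2.comap _⟩ : 𝒩(G)))
    fun _ _ h => (Subgroup.comap_lt_comap_of_surjective (QuotientGroup.mk'_surjective N)).2 h

theorem Subgroup.finite_of_disjoint {H L : Subgroup G} [L.FiniteIndex] (h : Disjoint H L) :
    (H : Set G).Finite :=
  Nat.finite_of_card_ne_zero <| by
    change Nat.card H ≠ 0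
    rw [← relIndex_bot_left, ← h.eq_bot, inf_relIndex_left]
    exact mt index_eq_zero_of_relIndex_eq_zero FiniteIndex.index_ne_zero

theorem finite_map_mk_of_inf_le {N K L : Subgroup G} [N.Normal] [L.FiniteIndex] (hNK : N ≤ K)
    (h : K ⊓ L ≤ N) : (K.map (QuotientGroup.mk' N) : Set (G ⧸ N)).Finite := by
  have : (L.map (QuotientGroup.mk' N)).FiniteIndex :=
    ⟨ne_zero_of_dvd_ne_zero Subgroup.FiniteIndex.index_ne_zero
      (Subgroup.index_map_dvd _ (QuotientGroup.mk'_surjective N))⟩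
  refine Subgroup.finite_of_disjoint (L := L.map (QuotientGroup.mk' N)) ?_
  rw [Subgroup.disjoint_def]
  rintro _ ⟨k, hk, rfl⟩ ⟨l, hl, hlk⟩
  have hlK : l ∈ K := by
    have : l⁻¹ * k ∈ N := (QuotientGroup.eq).1 hlk
    simpa using K.mul_mem hk (K.inv_mem (hNK this))
  rw [← hlk]
  exact (QuotientGroup.eq_one_iff l).2 (h ⟨hlK, hl⟩)

theorem exists_isGreatest_finite_normal [WellFoundedGT 𝒩(G)] :
    ∃ R : Subgroup G, IsGreatest {K : Subgroup G | K.Normal ∧ (K : Set G).Finite} R := by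
  obtain ⟨R, hR, hmax⟩ := wellFounded_gt.has_min {K : 𝒩(G) | (K.1 : Set G).Finite}
    ⟨⟨⊥, inferInstance⟩, by simp⟩
  refine ⟨R.1, ⟨R.2, hR⟩, fun K ⟨hK, hKfin⟩ => ?_⟩
  have := R.2
  let KR : 𝒩(G) := ⟨K ⊔ R.1, inferInstance⟩
  have hKR : (KR.1 : Set G).Finite := by
    rw [Subgroup.mul_normal]
    exact hKfin.mul hR
  have : R = KR := eq_of_le_of_not_lt (show R.1 ≤ K ⊔ R.1 from le_sup_right) (hmax KR hKR)
  exact le_sup_left.trans (congrArg Subtype.val this).ge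

theorem exists_finite_not_disjoint_of_finite_normal [WellFoundedGT 𝒩(G)] :
    ∃ F : Set G, F.Finite ∧ 1 ∉ F ∧
      ∀ K : Subgroup G, K.Normal → (K : Set G).Finite → K ≠ ⊥ → ¬ Disjoint F K := by
  obtain ⟨R, ⟨-, hRfin⟩, hR⟩ := exists_isGreatest_finite_normal (G := G)
  refine ⟨(R : Set G) \ {1}, hRfin.sdiff, fun h => h.2 rfl, fun K hK hKfin hK1 => ?_⟩
  obtain ⟨g, hgK, hg1⟩ := K.bot_or_exists_ne_one.resolve_left hK1
  exact not_disjoint_iff.2 ⟨g, ⟨hR ⟨hK, hKfin⟩ hgK, hg1⟩, hgK⟩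

theorem Group.ResiduallyFinite.exists_disjoint [Group.ResiduallyFinite G] {F : Set G}
    (hF : F.Finite) (h1 : 1 ∉ F) : ∃ H : FiniteIndexNormalSubgroup G, Disjoint F H := by
  induction F, hF using Set.Finite.induction_on with
  | empty => exact ⟨.ofSubgroup ⊤, empty_disjoint _⟩
  | @insert a s _ _ ih =>
    obtain ⟨H, hH⟩ := ih fun h => h1 (mem_insert_of_mem a h)
    obtain ⟨H', hH'⟩ :=
      Group.exists_finiteIndexNormalSubgroup_notMem a fun h => h1 (h ▸ mem_insert a s)
    exact ⟨H ⊓ H', disjoint_insert_left.2 ⟨fun h => hH' h.2, hH.mono_right fun g hg => hg.1⟩⟩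

end GroupTheory

section Chabauty

variable {G : Type u} [Group G]

theorem Subgroup.isClopen_setOf_mem (g : G) : IsClopen {H : Subgroup G | g ∈ H} := by
  have : {H : Subgroup G | g ∈ H} = (fun H g => @decide (g ∈ H) (Classical.propDecidable _)) ⁻¹'
      ((fun p : G → Bool => p g) ⁻¹' {true}) := by
    ext
    simp
  rw [this]
  exact ((isClopen_discrete {true}).preimage (continuous_apply g)).preimage continuous_induced_dom

theorem Subgroup.nhds_hasBasis (H : Subgroup G) :
    (𝓝 H).HasBasis Set.Finite fun F => {K : Subgroup G | ∀ g ∈ F, g ∈ K ↔ g ∈ H} := by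
  rw [chabautyTopology, nhds_induced, nhds_pi]
  simp only [nhds_discrete]
  convert (hasBasis_pi_pure _).comap _ using 2 with F
  ext K
  simp [decide_eq_decide]

theorem nhds_normal_hasBasis (N : 𝒩(G)) :
    (𝓝 N).HasBasis Set.Finite fun F => {K : 𝒩(G) | ∀ g ∈ F, g ∈ K.1 ↔ g ∈ N.1} := by
  rw [nhds_induced]
  exact (Subgroup.nhds_hasBasis N.1).comap _

variable [WellFoundedGT 𝒩(G)]

theorem exists_finite_normalClosure_eq (N : Subgroup G) [N.Normal] :
    ∃ T : Set G, T.Finite ∧ Subgroup.normalClosure T = N := by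
  obtain ⟨M, ⟨T, hT, hTN, hTM⟩, hM⟩ := wellFounded_gt.has_min
    {M : 𝒩(G) | ∃ T : Set G, T.Finite ∧ T ⊆ N ∧ Subgroup.normalClosure T = M.1}
    ⟨⟨_, Subgroup.normalClosure_normal⟩, ∅, finite_empty, empty_subset _, rfl⟩
  refine ⟨T, hT, le_antisymm (Subgroup.normalClosure_le_normal hTN) fun g hg => ?_⟩
  let M' : 𝒩(G) := ⟨Subgroup.normalClosure (insert g T), Subgroup.normalClosure_normal⟩
  have hMM' : M ≤ M' := by
    change M.1 ≤ M'.1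
    rw [← hTM]
    exact Subgroup.normalClosure_mono (subset_insert g T)
  have hM' : M = M' :=
    eq_of_le_of_not_lt hMM' (hM M' ⟨insert g T, hT.insert g, insert_subset hg hTN, rfl⟩)
  rw [hTM, hM']
  exact Subgroup.subset_normalClosure (mem_insert g T)

theorem isOpen_setOf_normal_le (N : Subgroup G) [N.Normal] : IsOpen {K : 𝒩(G) | N ≤ K.1} := by
  obtain ⟨T, hT, hTN⟩ := exists_finite_normalClosure_eq N
  have : {K : 𝒩(G) | N ≤ K.1} = ⋂ g ∈ T, Subtype.val ⁻¹' {H : Subgroup G | g ∈ H} := by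
    ext K
    have := K.2
    simp [← hTN, ← Subgroup.normalClosure_subset_iff, subset_def]
  rw [this]
  exact hT.isOpen_biInter fun g _ =>
    (Subgroup.isClopen_setOf_mem g).isOpen.preimage continuous_subtype_val

theorem isOpenEmbedding_subtype_le (N : Subgroup G) [N.Normal] :
    IsOpenEmbedding fun K : {K : Subgroup G // K.Normal ∧ N ≤ K} => (⟨K.1, K.2.1⟩ : 𝒩(G)) := by
  refine ⟨⟨?_, fun K K' h => Subtype.ext (congrArg (fun K : 𝒩(G) => K.1) h)⟩, ?_⟩
  · exact (IsInducing.of_comp_iff IsInducing.subtypeVal).1 IsInducing.subtypeVal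
  · convert isOpen_setOf_normal_le N
    ext K
    exact ⟨fun ⟨K', hK'⟩ => hK' ▸ K'.2.2, fun h => ⟨⟨K.1, K.2, h⟩, rfl⟩⟩

theorem accPt_iff_exists_gt {N : 𝒩(G)} {S : Set 𝒩(G)} :
    AccPt N (𝓟 S) ↔
      ∀ F : Set G, F.Finite → Disjoint F N.1 → ∃ K ∈ S, N < K ∧ Disjoint F K.1 := by
  rw [accPt_iff_nhds]
  constructor
  · intro h F hF hFN
    have := N.2
    obtain ⟨T, hT, hTN⟩ := exists_finite_normalClosure_eq N.1
    obtain ⟨K, ⟨hKU, hKS⟩, hKN⟩ := h _ ((nhds_normal_hasBasis N).mem_of_mem (hT.union hF))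
    have := K.2
    have hNK : N ≤ K := by
      change N.1 ≤ K.1
      rw [← hTN]
      exact Subgroup.normalClosure_le_normal fun g hg =>
        (hKU g (Or.inl hg)).2 (hTN ▸ Subgroup.subset_normalClosure hg)
    exact ⟨K, hKS, hNK.lt_of_ne' hKN,
      disjoint_left.2 fun g hgF hgK => disjoint_left.1 hFN hgF ((hKU g (Or.inr hgF)).1 hgK)⟩
  · intro h U hU
    obtain ⟨F, hF, hFU⟩ := (nhds_normal_hasBasis N).mem_iff.1 hU
    obtain ⟨K, hKS, hNK, hFK⟩ :=
      h {g ∈ F | g ∉ N.1} (hF.subset (sep_subset F _)) (disjoint_left.2 fun _ hg => hg.2)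
    refine ⟨K, ⟨hFU fun g hg => ⟨fun hgK => ?_, fun hgN => hNK.le hgN⟩, hKS⟩, hNK.ne'⟩
    by_contra hgN
    exact disjoint_left.1 hFK ⟨hg, hgN⟩ hgK

theorem mem_cbD_succ_iff {N : 𝒩(G)} {α : Ordinal} :
    N ∈ cbD 𝒩(G) (α + 1) ↔
      ∀ F : Set G, F.Finite → Disjoint F N.1 → ∃ K ∈ cbD 𝒩(G) α, N < K ∧ Disjoint F K.1 := by
  rw [cbD_succ, mem_derivedSet, accPt_iff_exists_gt]

theorem exists_notMem_cbD (N : 𝒩(G)) : ∃ β : Ordinal.{u}, N ∉ cbD 𝒩(G) β := by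
  induction N using WellFoundedGT.induction with
  | _ N ih =>
  choose β hβ using ih
  refine ⟨(⨆ K : {K // N < K}, β K.1 K.2) + 1, fun hN => ?_⟩
  obtain ⟨K, hK, hNK, -⟩ := mem_cbD_succ_iff.1 hN ∅ finite_empty (empty_disjoint _)
  exact hβ K hNK (cbD_antitone (Ordinal.le_iSup _ ⟨K, hNK⟩) hK)

theorem exists_finite_not_disjoint_of_finite_map (N : Subgroup G) [N.Normal] :
    ∃ T : Set G, T.Finite ∧ Disjoint T N ∧ ∀ K : Subgroup G, K.Normal → N < K →
      (K.map (QuotientGroup.mk' N) : Set (G ⧸ N)).Finite → ¬ Disjoint T K := by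
  obtain ⟨F, hF, hF1, hFK⟩ := exists_finite_not_disjoint_of_finite_normal (G := G ⧸ N)
  refine ⟨Quotient.out '' F, hF.image _, ?_, fun K hK hNK hKfin => ?_⟩
  · refine disjoint_left.2 ?_
    rintro _ ⟨x, hx, rfl⟩ hxN
    rw [← QuotientGroup.out_eq' x, QuotientGroup.eq_one_iff _ |>.2 hxN] at hx
    exact hF1 hx
  · have hmap : K.map (QuotientGroup.mk' N) ≠ ⊥ := by
      rw [Ne, Subgroup.map_eq_bot_iff, QuotientGroup.ker_mk']
      exact hNK.not_ge
    obtain ⟨x, hxF, hxK⟩ := not_disjoint_iff.1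
      (hFK _ (hK.map _ (QuotientGroup.mk'_surjective N)) hKfin hmap)
    refine not_disjoint_iff.2 ⟨x.out, mem_image_of_mem _ hxF, ?_⟩
    have : x.out ∈ (K.map (QuotientGroup.mk' N)).comap (QuotientGroup.mk' N) := by
      rwa [Subgroup.mem_comap, QuotientGroup.mk'_apply, QuotientGroup.out_eq']
    rwa [Subgroup.comap_map_eq, QuotientGroup.ker_mk', sup_eq_left.2 hNK.le] at this

theorem accPt_inf_of_finiteIndex (L : 𝒩(G)) [L.1.FiniteIndex] {N : 𝒩(G)} {S : Set 𝒩(G)}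
    (hN : AccPt N (𝓟 S)) : AccPt (N ⊓ L) (𝓟 ((· ⊓ L) '' S)) := by
  have := N.2
  rw [accPt_iff_exists_gt] at hN ⊢
  intro F hF hFNL
  obtain ⟨T, hT, hTN, hTK⟩ := exists_finite_not_disjoint_of_finite_map N.1
  obtain ⟨K, hKS, hNK, hFK⟩ := hN ({g ∈ F | g ∉ N.1} ∪ T)
    ((hF.subset (sep_subset F _)).union hT)
    (disjoint_union_left.2 ⟨disjoint_left.2 fun _ hg => hg.2, hTN⟩)
  rw [disjoint_union_left] at hFK
  refine ⟨K ⊓ L, mem_image_of_mem _ hKS,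
    lt_of_le_of_ne (inf_le_inf_right _ hNK.le) fun h => ?_, ?_⟩
  · have hKL : K.1 ⊓ L.1 ≤ N.1 := (congrArg Subtype.val h).ge.trans inf_le_left
    exact hTK K.1 K.2 hNK (finite_map_mk_of_inf_le hNK.le hKL) hFK.2
  · refine disjoint_left.2 fun g hgF hgKL => ?_
    by_cases hgN : g ∈ N.1
    · exact disjoint_left.1 hFNL hgF ⟨hgN, hgKL.2⟩
    · exact disjoint_left.1 hFK.1 ⟨hgF, hgN⟩ hgKL.1

theorem nsBot_mem_cbD_succ_iff [Group.ResiduallyFinite G] {α : Ordinal} :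
    nsBot G ∈ cbD 𝒩(G) (α + 1) ↔ ∃ N ∈ cbD 𝒩(G) α, (N.1 : Set G).Infinite := by
  rw [mem_cbD_succ_iff]
  constructor
  · intro h
    obtain ⟨F, hF, hF1, hFK⟩ := exists_finite_not_disjoint_of_finite_normal (G := G)
    obtain ⟨K, hK, hK1, hFK'⟩ := h F hF (by simpa [nsBot] using hF1)
    exact ⟨K, hK, fun hKfin => hFK K.1 K.2 hKfin (fun h => hK1.ne' (Subtype.ext h)) hFK'⟩
  · rintro ⟨N, hN, hNinf⟩ F hF hF1
    obtain ⟨L, hL⟩ := Group.ResiduallyFinite.exists_disjoint hF (by simpa [nsBot] using hF1)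
    let L' : 𝒩(G) := ⟨L, inferInstance⟩
    have : L'.1.FiniteIndex := L.isFiniteIndex'
    refine ⟨N ⊓ L', mapsTo_cbD (fun _ _ => accPt_inf_of_finiteIndex L') α hN,
      lt_of_le_of_ne (show ⊥ ≤ N.1 ⊓ L from bot_le) fun h => hNinf ?_, hL.mono_right inf_le_right⟩
    exact Subgroup.finite_of_disjoint (L := L.toSubgroup)
      (disjoint_iff.2 (congrArg Subtype.val h).symm)

end Chabauty

/-- Let `G` be a group satisfying max-n (every increasing chain of normal
subgroups stabilizes, i.e. `>` is well-founded on `𝒩(G)`) such that every quotient of `G`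
is residually finite (for every normal `N` and `g ∉ N` there is a normal subgroup `K ⊇ N`
of finite index with `g ∉ K`). Then `cb(G) = sup { cb(G/N) + 1 : N infinite normal }`,
where `cb(G/N)` is the Cantor–Bendixson rank of the point `N` in the space
`{K ∈ 𝒩(G) : N ≤ K}`, which is canonically homeomorphic to `𝒩(G/N)`. -/
theorem cb_eq_sup_cb_quotients_of_maxn (G : Type u) [Group G]
    (hmax : WellFounded ((· > ·) :
      {N : Subgroup G // N.Normal} → {N : Subgroup G // N.Normal} → Prop))
    (hres : ∀ N : Subgroup G, N.Normal → ∀ g ∉ N,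
      ∃ K : Subgroup G, K.Normal ∧ N ≤ K ∧ K.index ≠ 0 ∧ g ∉ K) :
    cbRank (nsBot G) =
      sSup {β : Ordinal.{u} | ∃ (N : Subgroup G) (hN : N.Normal), (N : Set G).Infinite ∧
        β = cbRank (⟨N, hN, le_rfl⟩ : {K : Subgroup G // K.Normal ∧ N ≤ K}) + 1} := by
  have : WellFoundedGT {N : Subgroup G // N.Normal} := ⟨hmax⟩
  have : Group.ResiduallyFinite G := Group.residuallyFinite_iff_exists_finiteIndex.2 fun g hg =>
    let ⟨K, _, _, hK, hgK⟩ := hres ⊥ inferInstance g (by simpa using hg)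
    ⟨K, ⟨hK⟩, hgK⟩
  have hrank (N : Subgroup G) (hN : N.Normal) :
      cbRank (⟨N, hN, le_rfl⟩ : {K : Subgroup G // K.Normal ∧ N ≤ K}) =
        cbRank (⟨N, hN⟩ : {N : Subgroup G // N.Normal}) := by
    have := hN
    exact (cbRank_of_isOpenEmbedding (isOpenEmbedding_subtype_le N) _).symm
  have hmem {N : {N : Subgroup G // N.Normal}} {α : Ordinal.{u}} :
      N ∈ cbD _ α ↔ α ≤ cbRank N :=
    mem_cbD_iff_le_cbRank (exists_notMem_cbD N)
  set S := {β : Ordinal.{u} | ∃ (N : Subgroup G) (hN : N.Normal), (N : Set G).Infinite ∧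
    β = cbRank (⟨N, hN, le_rfl⟩ : {K : Subgroup G // K.Normal ∧ N ≤ K}) + 1}
  have hbound : cbRank (nsBot G) ∈ upperBounds S := by
    rintro _ ⟨N, hN, hNinf, rfl⟩
    rw [hrank N hN, ← hmem, nsBot_mem_cbD_succ_iff]
    exact ⟨⟨N, hN⟩, hmem.2 le_rfl, hNinf⟩
  refine le_antisymm (le_of_forall_lt fun α hα => ?_) (csSup_le' hbound)
  obtain ⟨N, hN, hNinf⟩ := nsBot_mem_cbD_succ_iff.1 (hmem.2 (Order.add_one_le_of_lt hα))
  calc α < cbRank N + 1 := Order.lt_add_one_iff.2 (hmem.1 hN)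
    _ ≤ sSup S := le_csSup ⟨_, hbound⟩ ⟨N.1, N.2, hNinf, by rw [hrank N.1 N.2]⟩
end
end

section
/- Let H be a semigroup and G an H-group with H-max-n, in an exact sequence of H-groups 1 → M → G → Q → 1 (M an H-stable normal subgroup, Q = G/M). Then ℓ_H(Q) + ℓ_{GH}(M) ≤ ℓ_H(G) ≤ ℓ_H(Q) ⊕ ℓ_{GH}(M), where ⊕ is the natural (Hessenberg) sum of ordinals. Moreover, if G = M × Q as an H-group, then ℓ_H(G) = ℓ_H(Q) ⊕ ℓ_{GH}(M). -/
noncomputable section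

universe u

namespace Ordinal

/-- Natural (Hessenberg) addition of ordinals, as defined in the older Mathlib
(`Mathlib/SetTheory/Ordinal/NaturalOps.lean`), which has since been removed. -/
noncomputable def nadd (a b : Ordinal.{u}) : Ordinal.{u} :=
  max (⨆ x : Set.Iio a, Order.succ (nadd x.1 b)) (⨆ x : Set.Iio b, Order.succ (nadd a x.1))
termination_by (a, b)
decreasing_by all_goals cases x; decreasing_tactic

end Ordinal

namespace NaturalOps

scoped infixl:65 " ♯ " => Ordinal.nadd

end NaturalOps

open Classical in
/-- The ordinal-valued "length" attached to an element of a poset `L`, defined by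
well-founded recursion on `>` (available under the max-n condition, i.e. well-foundedness
of `>`; junk value `0` otherwise): `gtRank x = sup { gtRank y + 1 : y > x }`.

For `L` the lattice of (`H`-stable) normal subgroups of a group `G` (resp. of submodules
of a module `M`), `gtRank N` is the ordinal length `ℓ(G/N)` (resp. `ℓ(M/N)`) of the
quotient, since (`H`-stable) normal subgroups of `G/N` correspond to those of `G`
containing `N`; in particular `gtRank ⊥ = ℓ(G)` (resp. `ℓ(M)`). -/
noncomputable def gtRank {L : Type u} [Preorder L] (x : L) : Ordinal.{u} :=
  if h : WellFounded ((· > ·) : L → L → Prop) then (h.apply x).rank else 0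

/-- An `H`-group structure on `G` (for `H` a semigroup) is an action of `H` on `G` by group
endomorphisms, i.e. a semigroup homomorphism `H → End(G)`. A normal subgroup `N` is
`H`-stable if it is invariant under the action. -/
def HStable {H G : Type*} [Mul H] [Group G] (act : H →ₙ* Monoid.End G)
    (N : Subgroup G) : Prop :=
  ∀ (h : H) (g : G), g ∈ N → act h g ∈ N

/-- The trivial subgroup as a point of the space `𝒩_H(G)` of `H`-stable normal
subgroups of `G`. -/
def hBot {H G : Type*} [Mul H] [Group G] (act : H →ₙ* Monoid.End G) :
    {N : Subgroup G // N.Normal ∧ HStable act N} :=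
  ⟨⊥, inferInstance, fun h g hg => by
    rw [Subgroup.mem_bot] at hg ⊢
    rw [hg, map_one]⟩

/-- The trivial subgroup as an element of the lattice of `H`-stable normal subgroups of `G`
contained in `M`; this lattice is the lattice of `GH`-stable normal subgroups of the
`GH`-group `M` (where `GH = G ⋊ H` acts on the normal subgroup `M` by conjugation and by
the `H`-action), so that `gtRank` of this element is the length `ℓ_{GH}(M)`. -/
def hBotIn {H G : Type*} [Mul H] [Group G] (act : H →ₙ* Monoid.End G) (M : Subgroup G) :
    {K : Subgroup G // (K.Normal ∧ HStable act K) ∧ K ≤ M} :=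
  ⟨⊥, ⟨inferInstance, fun h g hg => by
    rw [Subgroup.mem_bot] at hg ⊢
    rw [hg, map_one]⟩, bot_le⟩

/-! `gtRank` is the rank of the well-founded relation `>`, so each estimate compares ranks along
an order map.

* Lower bound: the `GH`-stable subgroups of `M` embed, strictly monotonically, into the
  `H`-stable normal subgroups of `G` lying below `M`, so ranks there are stacked on top of
  `gtRank M = ℓ_H(G/M)`.
* Upper bound: by the modular law (which holds because `M` is normal), `N ↦ (N ⊔ M, N ⊓ M)`
  detects strict inclusions, and a rank bounded along such a pair of monotone maps is bounded
  by the natural sum of the two ranks.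
* Direct products: for `M ≤ A` and `B ≤ M`, `A` and `B` are recovered from `(A ⊓ Q) ⊔ B` as
  its join and its meet with `M`, so this map is strictly monotone in each variable, which gives
  the reverse inequality.
-/

namespace Ordinal

open scoped NaturalOps

theorem nadd_lt_nadd_right {b c : Ordinal.{u}} (h : b < c) (a : Ordinal.{u}) :
    b ♯ a < c ♯ a := by
  rw [nadd.eq_1 c a]
  refine (Order.lt_succ (b ♯ a)).trans_le (le_trans ?_ (le_max_left _ _))
  exact Ordinal.le_iSup (fun x : Set.Iio c => Order.succ (x.1 ♯ a)) ⟨b, h⟩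

theorem nadd_lt_nadd_left {b c : Ordinal.{u}} (h : b < c) (a : Ordinal.{u}) :
    a ♯ b < a ♯ c := by
  rw [nadd.eq_1 a c]
  refine (Order.lt_succ (a ♯ b)).trans_le (le_trans ?_ (le_max_right _ _))
  exact Ordinal.le_iSup (fun x : Set.Iio c => Order.succ (a ♯ x.1)) ⟨b, h⟩

theorem nadd_le_nadd_right {b c : Ordinal.{u}} (h : b ≤ c) (a : Ordinal.{u}) :
    b ♯ a ≤ c ♯ a := by
  rcases h.lt_or_eq with h | rfl
  exacts [(nadd_lt_nadd_right h a).le, le_rfl]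

theorem nadd_le_nadd_left {b c : Ordinal.{u}} (h : b ≤ c) (a : Ordinal.{u}) :
    a ♯ b ≤ a ♯ c := by
  rcases h.lt_or_eq with h | rfl
  exacts [(nadd_lt_nadd_left h a).le, le_rfl]

theorem nadd_lt_nadd_of_lt_of_le {a b c d : Ordinal.{u}} (h₁ : a < b) (h₂ : c ≤ d) :
    a ♯ c < b ♯ d :=
  (nadd_lt_nadd_right h₁ c).trans_le (nadd_le_nadd_left h₂ b)

theorem nadd_lt_nadd_of_le_of_lt {a b c d : Ordinal.{u}} (h₁ : a ≤ b) (h₂ : c < d) :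
    a ♯ c < b ♯ d :=
  (nadd_le_nadd_right h₁ c).trans_lt (nadd_lt_nadd_left h₂ b)

theorem nadd_le_iff {a b c : Ordinal.{u}} :
    b ♯ c ≤ a ↔ (∀ b' < b, b' ♯ c < a) ∧ ∀ c' < c, b ♯ c' < a := by
  refine ⟨fun h => ⟨fun b' hb => (nadd_lt_nadd_right hb c).trans_le h,
    fun c' hc => (nadd_lt_nadd_left hc b).trans_le h⟩, fun ⟨h₁, h₂⟩ => ?_⟩
  rw [nadd.eq_1 b c]
  exact max_le (Ordinal.iSup_le fun x => Order.succ_le_of_lt (h₁ x.1 x.2))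
    (Ordinal.iSup_le fun x => Order.succ_le_of_lt (h₂ x.1 x.2))

end Ordinal

section GtRank

open scoped NaturalOps
open Ordinal

variable {α β γ : Type u} [Preorder α] [Preorder β] [Preorder γ]

theorem gtRank_eq_rank [WellFoundedGT α] (x : α) : gtRank x = IsWellFounded.rank (· > ·) x :=
  dif_pos IsWellFounded.wf

theorem gtRank_strictAnti [WellFoundedGT α] : StrictAnti (gtRank : α → Ordinal) := by
  intro x y h
  simp only [gtRank_eq_rank]
  exact WellFoundedGT.rank_strictAnti h

theorem lt_gtRank_iff [WellFoundedGT α] {x : α} {o : Ordinal} :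
    o < gtRank x ↔ ∃ y, x < y ∧ o ≤ gtRank y := by
  rw [gtRank_eq_rank, IsWellFounded.rank_eq, Ordinal.lt_iSup_iff]
  simp only [Order.lt_succ_iff, Subtype.exists, exists_prop, gtRank_eq_rank]

theorem gtRank_le_iff [WellFoundedGT α] {x : α} {o : Ordinal} :
    gtRank x ≤ o ↔ ∀ y, x < y → gtRank y < o := by
  simpa only [not_lt, not_exists, not_and, not_le] using (lt_gtRank_iff (x := x) (o := o)).not

theorem gtRank_antitone [WellFoundedGT α] : Antitone (gtRank : α → Ordinal) := fun _ _ h =>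
  gtRank_le_iff.2 fun _ hz => gtRank_strictAnti (h.trans_lt hz)

theorem StrictMono.gtRank_add_gtRank_le [WellFoundedGT β] {f : α → β} (hf : StrictMono f)
    {m : β} (hm : ∀ a, f a ≤ m) (a : α) : gtRank m + gtRank a ≤ gtRank (f a) := by
  have := hf.wellFoundedGT
  induction a using WellFoundedGT.induction with
  | _ a ih =>
  refine le_of_forall_lt fun o ho => ?_
  rcases lt_or_ge o (gtRank m) with hom | hmo
  · exact hom.trans_le (gtRank_antitone (hm a))
  obtain ⟨δ, rfl⟩ := le_iff_exists_add.1 hmo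
  obtain ⟨a', haa', hδ⟩ := lt_gtRank_iff.1 ((add_lt_add_iff_left _).1 ho)
  calc gtRank m + δ ≤ gtRank m + gtRank a' := add_le_add_right hδ _
    _ ≤ gtRank (f a') := ih a' haa'
    _ < gtRank (f a) := gtRank_strictAnti (hf haa')

theorem gtRank_le_nadd_of_monotone [WellFoundedGT α] [WellFoundedGT β] [WellFoundedGT γ]
    {f : α → β} {g : α → γ} (hf : Monotone f) (hg : Monotone g)
    (hfg : ∀ ⦃x y⦄, x ≤ y → f y ≤ f x → g y ≤ g x → y ≤ x) (x : α) :
    gtRank x ≤ gtRank (f x) ♯ gtRank (g x) := by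
  induction x using WellFoundedGT.induction with
  | _ x ih =>
  refine gtRank_le_iff.2 fun y hxy => (ih y hxy).trans_lt ?_
  by_cases hfyx : f y ≤ f x
  · have hgxy : g x < g y :=
      (hg hxy.le).lt_of_not_ge fun hgyx => hxy.not_ge (hfg hxy.le hfyx hgyx)
    exact nadd_lt_nadd_of_le_of_lt (gtRank_antitone (hf hxy.le)) (gtRank_strictAnti hgxy)
  · exact nadd_lt_nadd_of_lt_of_le (gtRank_strictAnti ((hf hxy.le).lt_of_not_ge hfyx))
      (gtRank_antitone (hg hxy.le))

theorem gtRank_nadd_gtRank_le_of_strictMonoOn [WellFoundedGT α] [WellFoundedGT β]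
    [WellFoundedGT γ] {s : Set α} (hs : IsUpperSet s) {F : α → β → γ}
    (hF₁ : ∀ b, StrictMonoOn (F · b) s) (hF₂ : ∀ a ∈ s, StrictMono (F a))
    {a : α} (ha : a ∈ s) (b : β) : gtRank a ♯ gtRank b ≤ gtRank (F a b) := by
  induction a using WellFoundedGT.induction generalizing b with
  | _ a iha =>
  induction b using WellFoundedGT.induction with
  | _ b ihb =>
  refine nadd_le_iff.2 ⟨fun o ho => ?_, fun o ho => ?_⟩
  · obtain ⟨a', haa', hoa'⟩ := lt_gtRank_iff.1 ho
    have ha' : a' ∈ s := hs haa'.le ha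
    calc o ♯ gtRank b ≤ gtRank a' ♯ gtRank b := nadd_le_nadd_right hoa' _
      _ ≤ gtRank (F a' b) := iha a' haa' ha' b
      _ < gtRank (F a b) := gtRank_strictAnti (hF₁ b ha ha' haa')
  · obtain ⟨b', hbb', hob'⟩ := lt_gtRank_iff.1 ho
    calc gtRank a ♯ o ≤ gtRank a ♯ gtRank b' := nadd_le_nadd_left hob' _
      _ ≤ gtRank (F a b') := ihb b' hbb'
      _ < gtRank (F a b) := gtRank_strictAnti (hF₂ a ha hbb')

end GtRank

namespace Subgroup

variable {G : Type*} [Group G]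

theorem sup_inf_assoc_of_le_of_normal {x : Subgroup G} (y : Subgroup G) [y.Normal]
    {z : Subgroup G} (h : x ≤ z) : (x ⊔ y) ⊓ z = x ⊔ y ⊓ z := by
  refine le_antisymm (fun g ⟨hxy, hz⟩ => ?_)
    (le_inf (sup_le_sup_left inf_le_left _) (sup_le h inf_le_right))
  obtain ⟨a, ha, b, hb, rfl⟩ := mem_sup_of_normal_right.1 hxy
  have hbz : b ∈ z := by simpa using z.mul_mem (z.inv_mem (h ha)) hz
  exact mul_mem_sup ha ⟨hb, hbz⟩

theorem eq_of_le_of_inf_le_of_sup_le_of_normal {x y z : Subgroup G} [z.Normal] (hxy : x ≤ y)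
    (hinf : y ⊓ z ≤ x ⊓ z) (hsup : y ⊔ z ≤ x ⊔ z) : x = y := by
  refine hxy.antisymm ?_
  calc y = (x ⊔ z) ⊓ y := by rw [inf_eq_right.2 (le_sup_left.trans hsup)]
    _ = x ⊔ z ⊓ y := sup_inf_assoc_of_le_of_normal z hxy
    _ ≤ x := sup_le le_rfl (by rw [inf_comm]; exact hinf.trans inf_le_left)

theorem inf_sup_sup_eq_of_sup_eq_top {A B M Q : Subgroup G} [Q.Normal] (hMQ : M ⊔ Q = ⊤)
    (hMA : M ≤ A) (hBM : B ≤ M) : A ⊓ Q ⊔ B ⊔ M = A := by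
  rw [sup_assoc, sup_eq_right.2 hBM, sup_comm, inf_comm, ← sup_inf_assoc_of_le_of_normal Q hMA,
    hMQ, top_inf_eq]

theorem inf_sup_inf_eq_of_inf_eq_bot {A B M Q : Subgroup G} [A.Normal] [Q.Normal]
    (hMQ : M ⊓ Q = ⊥) (hBM : B ≤ M) : (A ⊓ Q ⊔ B) ⊓ M = B := by
  rw [sup_comm, sup_inf_assoc_of_le_of_normal _ hBM, sup_eq_left]
  exact (le_inf inf_le_right (inf_le_left.trans inf_le_right)).trans (hMQ.trans_le bot_le)

end Subgroup

section HStable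

variable {H : Type*} [Mul H] {G : Type*} [Group G] {act : H →ₙ* Monoid.End G}

theorem HStable.inf {N K : Subgroup G} (hN : HStable act N) (hK : HStable act K) :
    HStable act (N ⊓ K) :=
  fun h g hg => ⟨hN h g hg.1, hK h g hg.2⟩

theorem HStable.sup {N K : Subgroup G} (hN : HStable act N) (hK : HStable act K) :
    HStable act (N ⊔ K) := fun h _ hg =>
  (sup_le (fun g hg => Subgroup.mem_sup_left (hN h g hg))
    (fun g hg => Subgroup.mem_sup_right (hK h g hg)) : N ⊔ K ≤ (N ⊔ K).comap (act h)) hg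

theorem normal_and_hStable_inf {N K : Subgroup G} (hN : N.Normal ∧ HStable act N)
    (hK : K.Normal ∧ HStable act K) : (N ⊓ K).Normal ∧ HStable act (N ⊓ K) :=
  have := hN.1; have := hK.1; ⟨inferInstance, hN.2.inf hK.2⟩

theorem normal_and_hStable_sup {N K : Subgroup G} (hN : N.Normal ∧ HStable act N)
    (hK : K.Normal ∧ HStable act K) : (N ⊔ K).Normal ∧ HStable act (N ⊔ K) :=
  have := hN.1; have := hK.1; ⟨inferInstance, hN.2.sup hK.2⟩

abbrev HStableNormal (act : H →ₙ* Monoid.End G) : Type _ :=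
  {N : Subgroup G // N.Normal ∧ HStable act N}

abbrev HStableNormalLE (act : H →ₙ* Monoid.End G) (M : Subgroup G) : Type _ :=
  {K : Subgroup G // (K.Normal ∧ HStable act K) ∧ K ≤ M}

instance [WellFoundedGT (HStableNormal act)] (M : Subgroup G) :
    WellFoundedGT (HStableNormalLE act M) :=
  StrictMono.wellFoundedGT (f := fun K => (⟨K.1, K.2.1⟩ : HStableNormal act)) fun _ _ h => h

end HStable

section Length

open scoped NaturalOps

variable {H : Type*} [Mul H] {G : Type u} [Group G] {act : H →ₙ* Monoid.End G}
  [WellFoundedGT (HStableNormal act)] {M : Subgroup G}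

theorem gtRank_add_gtRank_hBotIn_le (hM : M.Normal) (hMs : HStable act M) :
    gtRank (⟨M, hM, hMs⟩ : HStableNormal act) + gtRank (hBotIn act M) ≤ gtRank (hBot act) :=
  StrictMono.gtRank_add_gtRank_le
    (f := fun K : HStableNormalLE act M => (⟨K.1, K.2.1⟩ : HStableNormal act))
    (fun _ _ h => h) (fun K => K.2.2) (hBotIn act M)

theorem gtRank_hBot_le_nadd (hM : M.Normal) (hMs : HStable act M) :
    gtRank (hBot act) ≤
      gtRank (⟨M, hM, hMs⟩ : HStableNormal act) ♯ gtRank (hBotIn act M) := by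
  have key := gtRank_le_nadd_of_monotone
    (f := fun N : HStableNormal act =>
      (⟨N.1 ⊔ M, normal_and_hStable_sup N.2 ⟨hM, hMs⟩⟩ : HStableNormal act))
    (g := fun N : HStableNormal act =>
      (⟨N.1 ⊓ M, normal_and_hStable_inf N.2 ⟨hM, hMs⟩, inf_le_right⟩ : HStableNormalLE act M))
    (fun x y h => show x.1 ⊔ M ≤ y.1 ⊔ M from sup_le_sup_right (Subtype.coe_le_coe.2 h) M)
    (fun x y h => show x.1 ⊓ M ≤ y.1 ⊓ M from inf_le_inf_right M (Subtype.coe_le_coe.2 h))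
    (fun _ _ hxy hsup hinf =>
      Subtype.coe_le_coe.1 (Subgroup.eq_of_le_of_inf_le_of_sup_le_of_normal hxy hinf hsup).ge)
    (hBot act)
  convert key using 3
  · exact Subtype.ext (bot_sup_eq M).symm
  · exact Subtype.ext (bot_inf_eq M).symm

theorem gtRank_nadd_gtRank_hBotIn_le_of_complement (hM : M.Normal) (hMs : HStable act M)
    {Q : Subgroup G} (hQ : Q.Normal) (hQs : HStable act Q) (hMQ : M ⊓ Q = ⊥)
    (hMQ' : M ⊔ Q = ⊤) :
    gtRank (⟨M, hM, hMs⟩ : HStableNormal act) ♯ gtRank (hBotIn act M) ≤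
      gtRank (hBot act) := by
  let F (A : HStableNormal act) (B : HStableNormalLE act M) : HStableNormal act :=
    ⟨A.1 ⊓ Q ⊔ B.1, normal_and_hStable_sup (normal_and_hStable_inf A.2 ⟨hQ, hQs⟩) B.2.1⟩
  have sup_F (A B) (hMA : M ≤ A.1) : (F A B).1 ⊔ M = A.1 :=
    Subgroup.inf_sup_sup_eq_of_sup_eq_top hMQ' hMA B.2.2
  have inf_F (A B) : (F A B).1 ⊓ M = B.1 :=
    have := A.2.1
    Subgroup.inf_sup_inf_eq_of_inf_eq_bot hMQ B.2.2
  have hF₁ : ∀ B, StrictMonoOn (F · B) {A | M ≤ A.1} := fun B =>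
    MonotoneOn.strictMonoOn_of_injOn
      (fun A _ A' _ (h : A ≤ A') => show (F A B).1 ≤ (F A' B).1 from
        sup_le_sup_right (inf_le_inf_right Q (Subtype.coe_le_coe.2 h)) _)
      fun A hA A' hA' (h : F A B = F A' B) => Subtype.ext <| by
        rw [← sup_F A B hA, ← sup_F A' B hA', h]
  have hF₂ : ∀ A ∈ {A | M ≤ A.1}, StrictMono (F A) := fun A _ =>
    Monotone.strictMono_of_injective
      (fun B B' (h : B ≤ B') => show (F A B).1 ≤ (F A B').1 from
        sup_le_sup_left (Subtype.coe_le_coe.2 h) _)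
      fun B B' (h : F A B = F A B') => Subtype.ext <| by
        rw [← inf_F A B, ← inf_F A B', h]
  have hs : IsUpperSet {A : HStableNormal act | M ≤ A.1} :=
    fun _ _ h (hA : M ≤ _) => show M ≤ _ from hA.trans h
  have key := gtRank_nadd_gtRank_le_of_strictMonoOn hs hF₁ hF₂
    (a := ⟨M, hM, hMs⟩) (le_refl M) (hBotIn act M)
  convert key using 2
  exact Subtype.ext (by simp [F, hMQ, hBot, hBotIn])

end Length

open scoped NaturalOps in
/-- Let `H` be a semigroup and `G` an `H`-group with `H`-max-n, in an
exact sequence of `H`-groups `1 → M → G → Q → 1` (`M` an `H`-stable normal subgroup,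
`Q = G/M`). Then `ℓ_H(Q) + ℓ_{GH}(M) ≤ ℓ_H(G) ≤ ℓ_H(Q) ⊕ ℓ_{GH}(M)` where `⊕` is the
natural (Hessenberg) sum; here `ℓ_H(G) = gtRank ⊥` and `ℓ_H(Q) = gtRank M` in the lattice
of `H`-stable normal subgroups of `G`, and `ℓ_{GH}(M) = gtRank ⊥` in the lattice of
`H`-stable normal subgroups of `G` contained in `M`. Moreover, if `G = M × Q` as an
`H`-group (i.e. `M` admits an `H`-stable normal complement), then
`ℓ_H(G) = ℓ_H(Q) ⊕ ℓ_{GH}(M)`. -/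
theorem length_extension_bounds {H : Type*} [Semigroup H] {G : Type u} [Group G]
    (act : H →ₙ* Monoid.End G)
    (hmax : WellFounded ((· > ·) :
      {N : Subgroup G // N.Normal ∧ HStable act N} →
        {N : Subgroup G // N.Normal ∧ HStable act N} → Prop))
    (M : Subgroup G) (hM : M.Normal) (hMs : HStable act M) :
    (gtRank (⟨M, hM, hMs⟩ : {N : Subgroup G // N.Normal ∧ HStable act N})
          + gtRank (hBotIn act M)
        ≤ gtRank (hBot act) ∧
      gtRank (hBot act)
        ≤ gtRank (⟨M, hM, hMs⟩ : {N : Subgroup G // N.Normal ∧ HStable act N})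
            ♯ gtRank (hBotIn act M)) ∧
    (∀ Q : Subgroup G, Q.Normal → HStable act Q → M ⊓ Q = ⊥ → M ⊔ Q = ⊤ →
      gtRank (hBot act)
        = gtRank (⟨M, hM, hMs⟩ : {N : Subgroup G // N.Normal ∧ HStable act N})
            ♯ gtRank (hBotIn act M)) := by
  have : WellFoundedGT {N : Subgroup G // N.Normal ∧ HStable act N} := ⟨hmax⟩
  refine ⟨⟨gtRank_add_gtRank_hBotIn_le hM hMs, gtRank_hBot_le_nadd hM hMs⟩,
    fun Q hQ hQs hMQ hMQ' => ?_⟩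
  exact (gtRank_hBot_le_nadd hM hMs).antisymm
    (gtRank_nadd_gtRank_hBotIn_le_of_complement hM hMs hQ hQs hMQ hMQ')
end
end
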